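/- arXiv:1808.05064 — 4 statements merged into one kernel-verified Lean document; each statement's English description precedes it below -/
import Mathlib

section
/- Let (X, ϱ) be a metric space in which every two points almost admit a midpoint, meaning: for all x, y ∈ X there exists a sequence (z_k) in X with |ϱ(x,y) − 2ϱ(x,z_k)| ≤ 1/k and |ϱ(x,y) − 2ϱ(y,z_k)| ≤ 1/k. Suppose there exists a Hausdorff topology σ on X such that every ϱ-bounded sequence has a σ-convergent subsequence, and ϱ is sequentially lower semicontinuous with respect to σ (i.e., if x_k → x and y_k → y in σ then ϱ(x,y) ≤ liminf ϱ(x_k,y_k)). Then every two points x, y ∈ X admit an exact midpoint: there exists z ∈ X with ϱ(x,y) = 2ϱ(x,z) = 2ϱ(z,y). -/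
open Filter

/-- If in a metric space every two points almost admit a midpoint, and there is a
Hausdorff topology `σ` such that `ϱ`-bounded sequences contain `σ`-converging
subsequences and the distance is sequentially lower semicontinuous w.r.t. `σ`,
then every two points admit an exact midpoint. -/
theorem exists_midpoint_of_almost_midpoints {X : Type*} [MetricSpace X]
    (σ : TopologicalSpace X) (hT2 : @T2Space X σ)
    (halm : ∀ x y : X, ∃ z : ℕ → X, ∀ k : ℕ, 1 ≤ k →
      |dist x y - 2 * dist x (z k)| ≤ 1 / (k : ℝ) ∧
      |dist x y - 2 * dist y (z k)| ≤ 1 / (k : ℝ))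
    (hcomp : ∀ u : ℕ → X, Bornology.IsBounded (Set.range u) →
      ∃ (x : X) (φ : ℕ → ℕ), StrictMono φ ∧
        Filter.Tendsto (u ∘ φ) Filter.atTop (@nhds X σ x))
    (hlsc : ∀ (u v : ℕ → X) (x y : X),
      Filter.Tendsto u Filter.atTop (@nhds X σ x) →
      Filter.Tendsto v Filter.atTop (@nhds X σ y) →
      dist x y ≤ Filter.liminf (fun k => dist (u k) (v k)) Filter.atTop) :
    ∀ x y : X, ∃ z : X, dist x y = 2 * dist x z ∧ dist x y = 2 * dist z y := by

  intro x y
  obtain ⟨z, hz⟩ := halm x y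
  set d := dist x y with hd
  set u : ℕ → X := fun k => z (k + 1) with hu
  have hk1 : ∀ k : ℕ, (0:ℝ) < (k:ℝ) + 1 := by
    intro k; positivity
  have hb : ∀ k : ℕ, dist x (u k) ≤ d / 2 + 1 / (2 * ((k:ℝ) + 1)) ∧
      dist y (u k) ≤ d / 2 + 1 / (2 * ((k:ℝ) + 1)) := by
    intro k
    have h := hz (k + 1) (Nat.le_add_left 1 k)
    push_cast at h
    obtain ⟨h1, h2⟩ := h
    rw [abs_le] at h1 h2
    have heq : (1:ℝ) / (2 * ((k:ℝ) + 1)) = (1 / ((k:ℝ) + 1)) / 2 := by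
      field_simp
    rw [heq]
    exact ⟨by linarith [h1.1], by linarith [h2.1]⟩
  have hbdd : Bornology.IsBounded (Set.range u) := by
    apply Metric.isBounded_range_iff.2
    refine ⟨d + 2, fun i j => ?_⟩
    have hi := (hb i).1
    have hj := (hb j).1
    have h2i : 1 / (2 * ((i:ℝ) + 1)) ≤ 1 / 2 := by
      apply one_div_le_one_div_of_le (by norm_num : (0:ℝ) < 2)
      nlinarith [(Nat.cast_nonneg i : (0:ℝ) ≤ i)]
    have h2j : 1 / (2 * ((j:ℝ) + 1)) ≤ 1 / 2 := by
      apply one_div_le_one_div_of_le (by norm_num : (0:ℝ) < 2)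
      nlinarith [(Nat.cast_nonneg j : (0:ℝ) ≤ j)]
    calc dist (u i) (u j) ≤ dist (u i) x + dist x (u j) := dist_triangle _ _ _
      _ ≤ (d / 2 + 1 / 2) + (d / 2 + 1 / 2) := by
          rw [dist_comm (u i) x]; linarith
      _ = d + 1 := by ring
      _ ≤ d + 2 := by linarith
  obtain ⟨w, φ, hφ, hconv⟩ := hcomp u hbdd
  -- key liminf bound
  have key : ∀ p : X, (∀ k : ℕ, dist p (u k) ≤ d / 2 + 1 / (2 * ((k:ℝ) + 1))) →
      Filter.liminf (fun k => dist p (u (φ k))) Filter.atTop ≤ d / 2 := by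
    intro p hp
    refine le_of_forall_pos_le_add fun ε hε => ?_
    have hfreq : ∃ᶠ k in Filter.atTop, dist p (u (φ k)) ≤ d / 2 + ε := by
      apply Filter.Eventually.frequently
      obtain ⟨N, hN⟩ := exists_nat_gt (1 / (2 * ε))
      filter_upwards [Filter.eventually_ge_atTop N] with k hk
      have hφk : (N:ℝ) ≤ (φ k : ℝ) := by
        exact_mod_cast le_trans hk (hφ.id_le k)
      have h1 : 1 / (2 * ((φ k : ℝ) + 1)) ≤ ε := by
        rw [div_le_iff₀ (by positivity)]
        have : 1 / (2 * ε) < (φ k : ℝ) + 1 := by linarith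
        rw [div_lt_iff₀ (by positivity)] at this
        nlinarith
      calc dist p (u (φ k)) ≤ d / 2 + 1 / (2 * ((φ k : ℝ) + 1)) := hp (φ k)
        _ ≤ d / 2 + ε := by linarith
    exact Filter.liminf_le_of_frequently_le hfreq
      ⟨0, Filter.eventually_map.2 (Filter.Eventually.of_forall fun k => dist_nonneg)⟩
  have hxw : dist x w ≤ d / 2 := by
    have := hlsc (fun _ => x) (u ∘ φ) x w tendsto_const_nhds hconv
    exact this.trans (key x fun k => (hb k).1)
  have hyw : dist y w ≤ d / 2 := by
    have := hlsc (fun _ => y) (u ∘ φ) y w tendsto_const_nhds hconv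
    exact this.trans (key y fun k => (hb k).2)
  have htri : d ≤ dist x w + dist w y := dist_triangle x w y
  rw [dist_comm w y] at htri
  exact ⟨w, by linarith, by rw [dist_comm w y]; linarith⟩
end

section
/- Let (X, ϱ) be a metric space in which every two points almost admit a midpoint. Assume there exists a Hausdorff topology σ on X such that ϱ-bounded sequences contain σ-converging subsequences and ϱ is sequentially lower semicontinuous with respect to σ. Then (X, ϱ) is a geodesic space: for all x₀, x₁ ∈ X there exists a curve x : [0,1] → X with x(0) = x₀, x(1) = x₁ and ϱ(x_t, x_s̄) ≤ |t − s̄| · ϱ(x₀, x₁) for all t, s̄ ∈ [0,1]. -/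
open Filter

lemma floor_div_approx (t : ℝ) (ht : 0 ≤ t) (n : ℕ) :
    |((⌊t * 2^n⌋₊ : ℕ):ℝ)/2^n - t| ≤ 1/2^n := by
  have h2 : (0:ℝ) < 2^n := by positivity
  have h0 : 0 ≤ t * 2^n := mul_nonneg ht h2.le
  have hl : ((⌊t * 2^n⌋₊:ℕ):ℝ) ≤ t * 2^n := Nat.floor_le h0
  have hu : t * 2^n < ⌊t * 2^n⌋₊ + 1 := Nat.lt_floor_add_one _
  have ha : ((⌊t * 2^n⌋₊:ℕ):ℝ)/2^n ≤ t := by rw [div_le_iff₀ h2]; exact hl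
  have hb : t - 1/2^n ≤ ((⌊t * 2^n⌋₊:ℕ):ℝ)/2^n := by
    rw [le_div_iff₀ h2, sub_mul, one_div, inv_mul_cancel₀ h2.ne']; linarith
  rw [abs_le]
  constructor
  · linarith
  · have : (0:ℝ) < 1/2^n := by positivity
    linarith

section DyadAux
set_option linter.unusedSectionVars false
variable {X : Type*} [MetricSpace X]

def dyad (mid : X → X → X) (x₀ x₁ : X) : ℕ → ℕ → X
  | 0, k => if k = 0 then x₀ else x₁
  | (n+1), k =>
    if k % 2 = 0 then dyad mid x₀ x₁ n (k / 2)
    else mid (dyad mid x₀ x₁ n (k / 2)) (dyad mid x₀ x₁ n (k / 2 + 1))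

variable (mid : X → X → X) (x₀ x₁ : X)

lemma dyad_even (n k : ℕ) : dyad mid x₀ x₁ (n+1) (2*k) = dyad mid x₀ x₁ n k := by
  simp [dyad, Nat.mul_mod_right, Nat.mul_div_cancel_left _ (by norm_num : 0 < 2)]

lemma dyad_odd (n k : ℕ) :
    dyad mid x₀ x₁ (n+1) (2*k+1)
      = mid (dyad mid x₀ x₁ n k) (dyad mid x₀ x₁ n (k+1)) := by
  have h1 : (2*k+1) % 2 = 1 := by omega
  have h2 : (2*k+1) / 2 = k := by omega
  simp [dyad, h1, h2]

lemma dyad_zero (n : ℕ) : dyad mid x₀ x₁ n 0 = x₀ := by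
  induction n with
  | zero => simp [dyad]
  | succ n ih => simpa using (dyad_even mid x₀ x₁ n 0).trans ih

variable (hm : ∀ a b : X, dist a (mid a b) ≤ dist a b / 2 ∧ dist b (mid a b) ≤ dist a b / 2)
include hm

lemma dyad_top : ∀ n k, 2^n ≤ k → dyad mid x₀ x₁ n k = x₁ := by
  intro n
  induction n with
  | zero => intro k hk; simp [dyad]; omega
  | succ n ih =>
    intro k hk
    obtain ⟨j, rfl | rfl⟩ := Nat.even_or_odd' k
    · rw [dyad_even]; exact ih j (by omega)
    · rw [dyad_odd]
      have h1 : dyad mid x₀ x₁ n j = x₁ := ih j (by omega)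
      have h2 : dyad mid x₀ x₁ n (j+1) = x₁ := ih (j+1) (by omega)
      rw [h1, h2]
      have := (hm x₁ x₁).1
      simp at this
      exact this.symm

lemma dyad_adj : ∀ n k, dist (dyad mid x₀ x₁ n k) (dyad mid x₀ x₁ n (k+1))
    ≤ dist x₀ x₁ / 2^n := by
  intro n
  induction n with
  | zero =>
    intro k
    rcases Nat.eq_zero_or_pos k with rfl | hk
    · simp [dyad]
    · have h1 : dyad mid x₀ x₁ 0 k = x₁ := dyad_top mid x₀ x₁ hm 0 k (by omega)
      have h2 : dyad mid x₀ x₁ 0 (k+1) = x₁ := dyad_top mid x₀ x₁ hm 0 (k+1) (by omega)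
      rw [h1, h2]; simp [dist_nonneg]
  | succ n ih =>
    intro k
    obtain ⟨j, rfl | rfl⟩ := Nat.even_or_odd' k
    · rw [dyad_even, dyad_odd]
      have := (hm (dyad mid x₀ x₁ n j) (dyad mid x₀ x₁ n (j+1))).1
      have h2 := ih j
      rw [pow_succ]
      calc _ ≤ dist (dyad mid x₀ x₁ n j) (dyad mid x₀ x₁ n (j+1)) / 2 := this
        _ ≤ dist x₀ x₁ / 2^n / 2 := by linarith
        _ = dist x₀ x₁ / (2^n * 2) := by ring
    · have he : 2*j+1+1 = 2*(j+1) := by ring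
      rw [dyad_odd, he, dyad_even, dist_comm]
      have := (hm (dyad mid x₀ x₁ n j) (dyad mid x₀ x₁ n (j+1))).2
      have h2 := ih j
      rw [pow_succ]
      calc _ ≤ dist (dyad mid x₀ x₁ n j) (dyad mid x₀ x₁ n (j+1)) / 2 := this
        _ ≤ dist x₀ x₁ / 2^n / 2 := by linarith
        _ = dist x₀ x₁ / (2^n * 2) := by ring

lemma dyad_chain (n k : ℕ) : ∀ m, dist (dyad mid x₀ x₁ n k) (dyad mid x₀ x₁ n (k+m))
    ≤ m * (dist x₀ x₁ / 2^n) := by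
  intro m
  induction m with
  | zero => simp
  | succ m ih =>
    have h1 := dyad_adj mid x₀ x₁ hm n (k+m)
    calc dist (dyad mid x₀ x₁ n k) (dyad mid x₀ x₁ n (k+(m+1)))
        ≤ dist (dyad mid x₀ x₁ n k) (dyad mid x₀ x₁ n (k+m))
          + dist (dyad mid x₀ x₁ n (k+m)) (dyad mid x₀ x₁ n (k+m+1)) := by
          rw [show k+(m+1) = k+m+1 by ring]; exact dist_triangle _ _ _
      _ ≤ m * (dist x₀ x₁ / 2^n) + dist x₀ x₁ / 2^n := by linarith
      _ = (m+1 : ℕ) * (dist x₀ x₁ / 2^n) := by push_cast; ring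

lemma dyad_dist (n a b : ℕ) :
    dist (dyad mid x₀ x₁ n a) (dyad mid x₀ x₁ n b)
      ≤ |(a:ℝ) - b| / 2^n * dist x₀ x₁ := by
  rcases le_total a b with h | h
  · obtain ⟨m, rfl⟩ := Nat.exists_eq_add_of_le h
    have := dyad_chain mid x₀ x₁ hm n a m
    have habs : |(a:ℝ) - (a+m:ℕ)| = m := by push_cast; rw [abs_sub_comm]; simp [abs_of_nonneg]
    rw [habs]
    calc _ ≤ m * (dist x₀ x₁ / 2^n) := this
      _ = (m:ℝ) / 2^n * dist x₀ x₁ := by ring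
  · obtain ⟨m, rfl⟩ := Nat.exists_eq_add_of_le h
    have := dyad_chain mid x₀ x₁ hm n b m
    have habs : |(b+m:ℕ) - (b:ℝ)| = m := by push_cast; simp [abs_of_nonneg]
    rw [dist_comm, habs]
    calc _ ≤ m * (dist x₀ x₁ / 2^n) := this
      _ = (m:ℝ) / 2^n * dist x₀ x₁ := by ring

lemma dyad_lift (n k : ℕ) : ∀ j, dyad mid x₀ x₁ n k = dyad mid x₀ x₁ (n+j) (k * 2^j) := by
  intro j
  induction j with
  | zero => simp
  | succ j ih =>
    have he : k * 2^(j+1) = 2 * (k * 2^j) := by ring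
    rw [he, show n+(j+1) = (n+j)+1 from rfl, dyad_even]
    exact ih

lemma dyad_bdd (n k : ℕ) : dist x₀ (dyad mid x₀ x₁ n k) ≤ dist x₀ x₁ := by
  rcases le_or_gt k (2^n) with h | h
  · have := dyad_dist mid x₀ x₁ hm n 0 k
    rw [dyad_zero] at this
    refine this.trans ?_
    have h1 : |(0:ℝ) - k| / 2^n ≤ 1 := by
      rw [abs_sub_comm]
      simp only [sub_zero]
      rw [abs_of_nonneg (by positivity), div_le_one (by positivity)]
      exact_mod_cast h
    nlinarith [dist_nonneg (x := x₀) (y := x₁), h1]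
  · rw [dyad_top mid x₀ x₁ hm n k h.le]

lemma dyad_cross (t : ℝ) (ht : 0 ≤ t) (n N : ℕ) (hnN : n ≤ N) :
    dist (dyad mid x₀ x₁ n ⌊t * 2^n⌋₊) (dyad mid x₀ x₁ N ⌊t * 2^N⌋₊)
      ≤ (1/2^n + 1/2^N) * dist x₀ x₁ := by
  obtain ⟨j, rfl⟩ := Nat.exists_eq_add_of_le hnN
  set a := ⌊t * 2^n⌋₊ with ha
  set b := ⌊t * 2^(n+j)⌋₊ with hb
  rw [dyad_lift mid x₀ x₁ hm n a j]
  refine (dyad_dist mid x₀ x₁ hm (n+j) (a * 2^j) b).trans ?_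
  have hd0 : (0:ℝ) ≤ dist x₀ x₁ := dist_nonneg
  refine mul_le_mul_of_nonneg_right ?_ hd0
  have h2n : (0:ℝ) < 2^n := by positivity
  have h2N : (0:ℝ) < 2^(n+j) := by positivity
  have key : |((a * 2^j : ℕ):ℝ) - b| / 2^(n+j) = |(a:ℝ)/2^n - (b:ℝ)/2^(n+j)| := by
    rw [← abs_of_pos h2N, ← abs_div, abs_of_pos h2N]
    congr 1
    push_cast
    field_simp
    ring
  rw [key]
  calc |(a:ℝ)/2^n - (b:ℝ)/2^(n+j)|
      ≤ |(a:ℝ)/2^n - t| + |t - (b:ℝ)/2^(n+j)| := abs_sub_le _ _ _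
    _ ≤ 1/2^n + 1/2^(n+j) := by
        have h1 := floor_div_approx t ht n
        have h2 := floor_div_approx t ht (n+j)
        rw [abs_sub_comm] at h2
        exact add_le_add h1 h2

lemma dyad_pair (t s : ℝ) (ht : 0 ≤ t) (hs : 0 ≤ s) (n : ℕ) :
    dist (dyad mid x₀ x₁ n ⌊t * 2^n⌋₊) (dyad mid x₀ x₁ n ⌊s * 2^n⌋₊)
      ≤ (|t - s| + 2/2^n) * dist x₀ x₁ := by
  set a := ⌊t * 2^n⌋₊ with ha
  set b := ⌊s * 2^n⌋₊ with hb
  refine (dyad_dist mid x₀ x₁ hm n a b).trans ?_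
  have hd0 : (0:ℝ) ≤ dist x₀ x₁ := dist_nonneg
  refine mul_le_mul_of_nonneg_right ?_ hd0
  have h2n : (0:ℝ) < 2^n := by positivity
  have key : |(a:ℝ) - b| / 2^n = |(a:ℝ)/2^n - (b:ℝ)/2^n| := by
    rw [← abs_of_pos h2n, ← abs_div, abs_of_pos h2n]
    congr 1
    ring
  rw [key]
  have h1 := floor_div_approx t ht n
  have h2 := floor_div_approx s hs n
  calc |(a:ℝ)/2^n - (b:ℝ)/2^n|
      ≤ |(a:ℝ)/2^n - t| + |t - (b:ℝ)/2^n| := abs_sub_le _ _ _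
    _ ≤ |(a:ℝ)/2^n - t| + (|t - s| + |s - (b:ℝ)/2^n|) := by
        have := abs_sub_le t s ((b:ℝ)/2^n)
        linarith [abs_nonneg ((a:ℝ)/2^n - t)]
    _ ≤ 1/2^n + (|t - s| + 1/2^n) := by
        rw [abs_sub_comm s ((b:ℝ)/2^n)]
        exact add_le_add h1 (add_le_add le_rfl h2)
    _ = |t - s| + 2/2^n := by ring

end DyadAux

lemma liminf_le_of_bound (u : ℕ → ℝ) (c : ℝ) (h0 : ∀ k, 0 ≤ u k)
    (h : ∀ ε > 0, ∀ᶠ k in atTop, u k ≤ c + ε) : liminf u atTop ≤ c := by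
  refine le_of_forall_pos_le_add ?_
  intro ε hε
  exact liminf_le_of_frequently_le ((h ε hε).frequently) (isBoundedUnder_of ⟨0, h0⟩)

lemma tendsto_c_div_pow (c : ℝ) : Tendsto (fun n : ℕ => c / 2^n) atTop (nhds 0) := by
  have h : Tendsto (fun n : ℕ => ((1:ℝ)/2)^n) atTop (nhds 0) :=
    tendsto_pow_atTop_nhds_zero_of_lt_one (by norm_num) (by norm_num)
  have h2 := h.const_mul c
  simpa [div_pow, div_eq_mul_inv] using h2
lemma exists_midpoint' {X : Type*} [MetricSpace X] (σ : TopologicalSpace X)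
    (halm : ∀ x y : X, ∃ z : ℕ → X, ∀ k : ℕ, 1 ≤ k →
      |dist x y - 2 * dist x (z k)| ≤ 1 / (k : ℝ) ∧
      |dist x y - 2 * dist y (z k)| ≤ 1 / (k : ℝ))
    (hcomp : ∀ u : ℕ → X, Bornology.IsBounded (Set.range u) →
      ∃ (x : X) (φ : ℕ → ℕ), StrictMono φ ∧
        Filter.Tendsto (u ∘ φ) Filter.atTop (@nhds X σ x))
    (hlsc : ∀ (u v : ℕ → X) (x y : X),
      Filter.Tendsto u Filter.atTop (@nhds X σ x) →
      Filter.Tendsto v Filter.atTop (@nhds X σ y) →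
      dist x y ≤ Filter.liminf (fun k => dist (u k) (v k)) Filter.atTop) :
    ∀ x y : X, ∃ m : X, dist x m ≤ dist x y / 2 ∧ dist y m ≤ dist x y / 2 := by
  intro x y
  obtain ⟨z, hz⟩ := halm x y
  set w : ℕ → X := fun k => z (k+1) with hw
  have hwle : ∀ k : ℕ, dist x (w k) ≤ dist x y / 2 + 1 / (2*((k:ℝ)+1)) := by
    intro k
    have h := (hz (k+1) (by omega)).1
    have h1 := (abs_le.mp h).1
    push_cast at h1
    have hk : (0:ℝ) < (k:ℝ) + 1 := by positivity
    have h2 : 2 * dist x (w k) ≤ dist x y + 1/((k:ℝ)+1) := by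
      simp only [hw]; linarith
    have h3 : 1/(2*((k:ℝ)+1)) = (1/((k:ℝ)+1))/2 := by field_simp
    linarith
  have hwle' : ∀ k : ℕ, dist y (w k) ≤ dist x y / 2 + 1 / (2*((k:ℝ)+1)) := by
    intro k
    have h := (hz (k+1) (by omega)).2
    have h1 := (abs_le.mp h).1
    push_cast at h1
    have hk : (0:ℝ) < (k:ℝ) + 1 := by positivity
    have h2 : 2 * dist y (w k) ≤ dist x y + 1/((k:ℝ)+1) := by
      simp only [hw]; linarith
    have h3 : 1/(2*((k:ℝ)+1)) = (1/((k:ℝ)+1))/2 := by field_simp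
    linarith
  have hwb : Bornology.IsBounded (Set.range w) := by
    apply (Metric.isBounded_closedBall (x := x) (r := dist x y / 2 + 1)).subset
    rintro _ ⟨k, rfl⟩
    rw [Metric.mem_closedBall, dist_comm]
    have hk : 1 / (2*((k:ℝ)+1)) ≤ 1 := by
      rw [div_le_one (by positivity)]
      have : (0:ℝ) ≤ (k:ℝ) := Nat.cast_nonneg k
      linarith
    linarith [hwle k]
  obtain ⟨m, φ, hφ, hconv⟩ := hcomp w hwb
  have hsmall : ∀ ε > (0:ℝ), ∀ᶠ k in atTop, 1 / (2*(((φ k):ℝ)+1)) ≤ ε := by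
    intro ε hε
    have h1 : Tendsto (fun k : ℕ => 1 / ((k:ℝ)+1)) atTop (nhds 0) :=
      tendsto_one_div_add_atTop_nhds_zero_nat
    filter_upwards [h1.eventually_le_const hε] with k hk
    refine le_trans ?_ hk
    have h2 : (k:ℝ) + 1 ≤ 2*(((φ k):ℝ)+1) := by
      have hka : k ≤ φ k := hφ.le_apply
      have : (k:ℝ) ≤ (φ k : ℝ) := by exact_mod_cast hka
      linarith
    apply one_div_le_one_div_of_le (by positivity) h2
  refine ⟨m, ?_, ?_⟩
  · have h1 := hlsc (fun _ => x) (w ∘ φ) x m tendsto_const_nhds hconv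
    refine h1.trans (liminf_le_of_bound _ _ (fun k => dist_nonneg) ?_)
    intro ε hε
    filter_upwards [hsmall ε hε] with k hk
    exact (hwle (φ k)).trans (by linarith)
  · have h1 := hlsc (fun _ => y) (w ∘ φ) y m tendsto_const_nhds hconv
    refine h1.trans (liminf_le_of_bound _ _ (fun k => dist_nonneg) ?_)
    intro ε hε
    filter_upwards [hsmall ε hε] with k hk
    exact (hwle' (φ k)).trans (by linarith)
/-- Refined Hopf–Rinow: if in a metric space every two points almost admit a
midpoint, and there is a Hausdorff topology `σ` such that `ϱ`-bounded sequences
contain `σ`-converging subsequences and the distance is sequentially lower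
semicontinuous w.r.t. `σ`, then the space is geodesic. -/
theorem geodesic_space_of_almost_midpoints {X : Type*} [MetricSpace X]
    (σ : TopologicalSpace X) (hT2 : @T2Space X σ)
    (halm : ∀ x y : X, ∃ z : ℕ → X, ∀ k : ℕ, 1 ≤ k →
      |dist x y - 2 * dist x (z k)| ≤ 1 / (k : ℝ) ∧
      |dist x y - 2 * dist y (z k)| ≤ 1 / (k : ℝ))
    (hcomp : ∀ u : ℕ → X, Bornology.IsBounded (Set.range u) →
      ∃ (x : X) (φ : ℕ → ℕ), StrictMono φ ∧
        Filter.Tendsto (u ∘ φ) Filter.atTop (@nhds X σ x))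
    (hlsc : ∀ (u v : ℕ → X) (x y : X),
      Filter.Tendsto u Filter.atTop (@nhds X σ x) →
      Filter.Tendsto v Filter.atTop (@nhds X σ y) →
      dist x y ≤ Filter.liminf (fun k => dist (u k) (v k)) Filter.atTop) :
    ∀ x₀ x₁ : X, ∃ γ : ℝ → X, γ 0 = x₀ ∧ γ 1 = x₁ ∧
      ∀ t ∈ Set.Icc (0 : ℝ) 1, ∀ s ∈ Set.Icc (0 : ℝ) 1,
        dist (γ t) (γ s) ≤ |t - s| * dist x₀ x₁ := by
  intro x₀ x₁
  have hmid := exists_midpoint' σ halm hcomp hlsc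
  choose mid hma hmb using hmid
  have hm : ∀ a b : X, dist a (mid a b) ≤ dist a b / 2 ∧ dist b (mid a b) ≤ dist a b / 2 :=
    fun a b => ⟨hma a b, hmb a b⟩
  have hd0 : (0:ℝ) ≤ dist x₀ x₁ := dist_nonneg
  -- the approximating sequences
  have hbdd : ∀ t : ℝ, Bornology.IsBounded
      (Set.range (fun n : ℕ => dyad mid x₀ x₁ n ⌊t * 2^n⌋₊)) := by
    intro t
    apply (Metric.isBounded_closedBall (x := x₀) (r := dist x₀ x₁)).subset
    rintro _ ⟨n, rfl⟩
    rw [Metric.mem_closedBall, dist_comm]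
    exact dyad_bdd mid x₀ x₁ hm n _
  have hlim : ∀ t : ℝ, ∃ (g : X) (φ : ℕ → ℕ), StrictMono φ ∧
      Filter.Tendsto ((fun n : ℕ => dyad mid x₀ x₁ n ⌊t * 2^n⌋₊) ∘ φ) atTop (@nhds X σ g) :=
    fun t => hcomp _ (hbdd t)
  choose γ ψ hψ hγ using hlim
  -- approximation estimate
  have happrox : ∀ t : ℝ, 0 ≤ t → ∀ n : ℕ,
      dist (dyad mid x₀ x₁ n ⌊t * 2^n⌋₊) (γ t) ≤ dist x₀ x₁ / 2^n := by
    intro t ht n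
    have h1 := hlsc (fun _ => dyad mid x₀ x₁ n ⌊t * 2^n⌋₊) _ _ _ tendsto_const_nhds (hγ t)
    refine h1.trans (liminf_le_of_bound _ _ (fun k => dist_nonneg) ?_)
    intro ε hε
    have htend := tendsto_c_div_pow (dist x₀ x₁)
    filter_upwards [htend.eventually_le_const hε, eventually_ge_atTop n] with k hk hkn
    have hkn' : n ≤ ψ t k := hkn.trans (hψ t).le_apply
    have h2 := dyad_cross mid x₀ x₁ hm t ht n (ψ t k) hkn'
    have h3 : dist x₀ x₁ / 2^(ψ t k) ≤ dist x₀ x₁ / 2^k := by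
      gcongr
      · norm_num
      · exact (hψ t).le_apply
    calc dist (dyad mid x₀ x₁ n ⌊t * 2^n⌋₊)
          (((fun n : ℕ => dyad mid x₀ x₁ n ⌊t * 2^n⌋₊) ∘ ψ t) k)
        ≤ (1/2^n + 1/2^(ψ t k)) * dist x₀ x₁ := h2
      _ = dist x₀ x₁ / 2^n + dist x₀ x₁ / 2^(ψ t k) := by ring
      _ ≤ dist x₀ x₁ / 2^n + ε := by linarith
  refine ⟨γ, ?_, ?_, ?_⟩
  · -- γ 0 = x₀
    have h : ∀ n : ℕ, dist x₀ (γ 0) ≤ dist x₀ x₁ / 2^n := by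
      intro n
      have := happrox 0 le_rfl n
      simpa [dyad_zero] using this
    have h0 := ge_of_tendsto (tendsto_c_div_pow (dist x₀ x₁)) (Filter.Eventually.of_forall h)
    exact (dist_le_zero.mp h0).symm
  · -- γ 1 = x₁
    have hfl : ∀ n : ℕ, ⌊(1:ℝ) * 2^n⌋₊ = 2^n := by
      intro n
      have : (1:ℝ) * 2^n = ((2^n : ℕ) : ℝ) := by push_cast; ring
      rw [this, Nat.floor_natCast]
    have h : ∀ n : ℕ, dist x₁ (γ 1) ≤ dist x₀ x₁ / 2^n := by
      intro n
      have := happrox 1 zero_le_one n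
      rwa [hfl n, dyad_top mid x₀ x₁ hm n (2^n) le_rfl] at this
    have h0 := ge_of_tendsto (tendsto_c_div_pow (dist x₀ x₁)) (Filter.Eventually.of_forall h)
    exact (dist_le_zero.mp h0).symm
  · -- Lipschitz estimate
    intro t ht s hs
    have hn : ∀ n : ℕ, dist (γ t) (γ s) ≤ |t - s| * dist x₀ x₁ + 4 * (dist x₀ x₁ / 2^n) := by
      intro n
      have h1 := happrox t ht.1 n
      have h2 := happrox s hs.1 n
      have h3 := dyad_pair mid x₀ x₁ hm t s ht.1 hs.1 n
      have h4 : dist (γ t) (γ s) ≤ dist (γ t) (dyad mid x₀ x₁ n ⌊t * 2^n⌋₊)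
          + dist (dyad mid x₀ x₁ n ⌊t * 2^n⌋₊) (dyad mid x₀ x₁ n ⌊s * 2^n⌋₊)
          + dist (dyad mid x₀ x₁ n ⌊s * 2^n⌋₊) (γ s) := dist_triangle4 _ _ _ _
      rw [dist_comm] at h1
      have h5 : (|t - s| + 2/2^n) * dist x₀ x₁
          = |t - s| * dist x₀ x₁ + 2 * (dist x₀ x₁ / 2^n) := by ring
      rw [h5] at h3
      linarith
    have htend : Filter.Tendsto (fun n : ℕ => |t - s| * dist x₀ x₁ + 4 * (dist x₀ x₁ / 2^n))
        atTop (nhds (|t - s| * dist x₀ x₁)) := by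
      have := ((tendsto_c_div_pow (dist x₀ x₁)).const_mul 4).const_add (|t - s| * dist x₀ x₁)
      simpa using this
    exact ge_of_tendsto htend (Filter.Eventually.of_forall hn)
end

section
/- Let P be a symmetric positive-definite d×d real matrix. For every symmetric matrix Ξ there exists a unique symmetric matrix U solving the Lyapunov equation 2Ξ = PU + UP, and the map Ξ ↦ U is linear. Moreover the bilinear form ⟨Ξ₁, Ξ₂⟩_P := Tr(P U_{Ξ₁} U_{Ξ₂}) is a symmetric positive-definite inner product on the space of symmetric matrices. -/
/-!
The Lyapunov operator `U ↦ P U + U P` is injective: pairing `P U + U P = 0` with `U` gives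
`tr (Uᵀ P U) + tr (U P Uᵀ) = 0`, a sum of two terms that are positive unless `U = 0`.
Being an injective endomorphism of a finite-dimensional space, it is invertible; it commutes
with transposition, so its inverse maps symmetric matrices to symmetric ones. The form
`tr (P U₁ U₂)` is symmetric because the trace is invariant under transposition and cyclic
permutation, and positive because `tr (P U U) = tr (Uᵀ P U)` for symmetric `U`.
-/

namespace Matrix

variable {n m : Type*} [Fintype n] [Fintype m]

lemma PosDef.trace_transpose_mul_mul_self_pos {P : Matrix n n ℝ} (hP : P.PosDef)
    {U : Matrix n m ℝ} (hU : U ≠ 0) : 0 < (Uᵀ * P * U).trace := by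
  have diag_eq (j : m) : (Uᵀ * P * U) j j = Uᵀ j ⬝ᵥ P *ᵥ Uᵀ j := (dotProduct_mulVec _ _ _).symm
  obtain ⟨j, hj⟩ : ∃ j, Uᵀ j ≠ 0 := by
    by_contra! h
    exact hU (transpose_eq_zero.mp (funext h))
  refine Finset.sum_pos' (fun j _ => ?_) ⟨j, Finset.mem_univ j, ?_⟩
  · simpa [diag_eq] using hP.posSemidef.dotProduct_mulVec_nonneg (Uᵀ j)
  · simpa [diag_eq] using hP.dotProduct_mulVec_pos hj

lemma PosDef.trace_mul_mul_self_pos_of_isSymm {P U : Matrix n n ℝ} (hP : P.PosDef)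
    (hU : U.IsSymm) (hU₀ : U ≠ 0) : 0 < (P * U * U).trace := by
  have h := hP.trace_transpose_mul_mul_self_pos hU₀
  rwa [hU.eq, ← trace_mul_cycle] at h

lemma trace_mul_mul_comm_of_isSymm {R : Type*} [CommSemiring R] {P A B : Matrix n n R}
    (hP : P.IsSymm) (hA : A.IsSymm) (hB : B.IsSymm) :
    (P * A * B).trace = (P * B * A).trace := by
  rw [← trace_transpose, transpose_mul, transpose_mul, hP.eq, hA.eq, hB.eq, ← Matrix.mul_assoc,
    trace_mul_cycle]

section Lyapunov

variable {R : Type*} [CommSemiring R]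

def lyapunovMap (P : Matrix n n R) : Matrix n n R →ₗ[R] Matrix n n R :=
  LinearMap.mulLeft R P + LinearMap.mulRight R P

@[simp]
lemma lyapunovMap_apply (P U : Matrix n n R) : lyapunovMap P U = P * U + U * P := rfl

lemma transpose_lyapunovMap {P : Matrix n n R} (hP : P.IsSymm) (U : Matrix n n R) :
    (lyapunovMap P U)ᵀ = lyapunovMap P Uᵀ := by
  simp [transpose_mul, hP.eq, add_comm]

end Lyapunov

variable {P : Matrix n n ℝ}

lemma PosDef.lyapunovMap_injective (hP : P.PosDef) : Function.Injective (lyapunovMap P) := by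
  rw [← LinearMap.ker_eq_bot, LinearMap.ker_eq_bot']
  intro U hU
  by_contra hne
  have h : (Uᵀ * P * U).trace + (Uᵀᵀ * P * Uᵀ).trace = 0 := by
    have := congrArg (fun M => (Uᵀ * M).trace) hU
    simp only [lyapunovMap_apply, Matrix.mul_add, trace_add, Matrix.mul_zero, trace_zero,
      ← Matrix.mul_assoc] at this
    rwa [transpose_transpose, trace_mul_cycle U P Uᵀ]
  linarith [hP.trace_transpose_mul_mul_self_pos hne,
    hP.trace_transpose_mul_mul_self_pos (fun h => hne (transpose_eq_zero.mp h))]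

noncomputable def PosDef.lyapunovEquiv (hP : P.PosDef) : Matrix n n ℝ ≃ₗ[ℝ] Matrix n n ℝ :=
  LinearEquiv.ofBijective (lyapunovMap P)
    ⟨hP.lyapunovMap_injective, LinearMap.injective_iff_surjective.mp hP.lyapunovMap_injective⟩

lemma PosDef.lyapunovMap_lyapunovEquiv_symm (hP : P.PosDef) (Ξ : Matrix n n ℝ) :
    lyapunovMap P (hP.lyapunovEquiv.symm Ξ) = Ξ :=
  hP.lyapunovEquiv.apply_symm_apply Ξ

lemma PosDef.isSymm_lyapunovEquiv_symm (hP : P.PosDef) {Ξ : Matrix n n ℝ} (hΞ : Ξ.IsSymm) :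
    (hP.lyapunovEquiv.symm Ξ).IsSymm := by
  refine hP.lyapunovMap_injective ?_
  rw [← transpose_lyapunovMap (isHermitian_iff_isSymm.mp hP.isHermitian),
    hP.lyapunovMap_lyapunovEquiv_symm, hΞ.eq]

end Matrix

open Matrix

/-- Lyapunov equation and the Bures metric: for `P` symmetric positive definite,
every symmetric `Ξ` admits a unique symmetric solution `U` of `P U + U P = 2 Ξ`,
the solution map is linear, and `⟨Ξ₁, Ξ₂⟩_P = Tr (P U_{Ξ₁} U_{Ξ₂})` is a
symmetric positive-definite inner product on symmetric matrices. -/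
theorem lyapunov_bures_metric {d : ℕ} (P : Matrix (Fin d) (Fin d) ℝ)
    (hP : P.PosDef) :
    (∀ Ξ : Matrix (Fin d) (Fin d) ℝ, Ξ.IsSymm →
      ∃! U : Matrix (Fin d) (Fin d) ℝ, U.IsSymm ∧ P * U + U * P = (2 : ℝ) • Ξ) ∧
    ∃ L : Matrix (Fin d) (Fin d) ℝ →ₗ[ℝ] Matrix (Fin d) (Fin d) ℝ,
      (∀ Ξ : Matrix (Fin d) (Fin d) ℝ, Ξ.IsSymm →
        (L Ξ).IsSymm ∧ P * L Ξ + L Ξ * P = (2 : ℝ) • Ξ) ∧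
      (∀ Ξ₁ Ξ₂ : Matrix (Fin d) (Fin d) ℝ, Ξ₁.IsSymm → Ξ₂.IsSymm →
        (P * L Ξ₁ * L Ξ₂).trace = (P * L Ξ₂ * L Ξ₁).trace) ∧
      (∀ Ξ : Matrix (Fin d) (Fin d) ℝ, Ξ.IsSymm → Ξ ≠ 0 →
        0 < (P * L Ξ * L Ξ).trace) := by
  let L := (2 : ℝ) • hP.lyapunovEquiv.symm.toLinearMap
  have solves (Ξ) : P * L Ξ + L Ξ * P = (2 : ℝ) • Ξ := by
    simpa [L] using congrArg ((2 : ℝ) • ·) (hP.lyapunovMap_lyapunovEquiv_symm Ξ)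
  have symm {Ξ} (hΞ : Ξ.IsSymm) : (L Ξ).IsSymm := (hP.isSymm_lyapunovEquiv_symm hΞ).smul (2 : ℝ)
  refine ⟨fun Ξ hΞ => ⟨L Ξ, ⟨symm hΞ, solves Ξ⟩, fun V hV => ?_⟩, L,
    fun Ξ hΞ => ⟨symm hΞ, solves Ξ⟩,
    fun Ξ₁ Ξ₂ h₁ h₂ => trace_mul_mul_comm_of_isSymm (isHermitian_iff_isSymm.mp hP.isHermitian)
      (symm h₁) (symm h₂),
    fun Ξ hΞ hΞ₀ => hP.trace_mul_mul_self_pos_of_isSymm (symm hΞ) (by simpa [L] using hΞ₀)⟩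
  exact hP.lyapunovMap_injective (hV.2.trans (solves Ξ).symm)
end

section
/- Let D be a symmetric positive-semidefinite d×d matrix and let A₀ ∈ 𝒫⁺⁺, A₁ ∈ 𝒫⁺ commute. Define F(t) = (tA₁+(1−t)A₀) D (tA₁+(1−t)A₀) and U(t) = 2(tA₁+(1−t)A₀)^{−1}(A₁−A₀) for t ∈ [0,1). Then F′(t) = (F(t)U(t))^{Sym} = ½(F(t)U(t) + U(t)F(t)), and the energy ∫₀¹ Tr(F(t)U(t)U(t)) dt equals 4 · Tr(D(A₁−A₀)²) = 4 D(A₁−A₀):(A₁−A₀). -/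
/-! Along the segment `B(t) = tA₁ + (1-t)A₀` every `B(t)` is invertible and commutes with
`Δ = A₁ - A₀`. Hence `F U = 2 B D Δ` and `U F = 2 Δ D B`, so that `½ (F U + U F) = Δ D B + B D Δ`
is the product-rule derivative of `F = B D B`; and `Tr (F U U) = 4 Tr (D Δ B⁻¹ Δ B) = 4 Tr (D Δ Δ)`
by cyclicity of the trace, independently of `t`. -/

open Matrix MeasureTheory

attribute [local instance] Matrix.frobeniusNormedAddCommGroup Matrix.frobeniusNormedSpace

attribute [local instance] Matrix.frobeniusNormedRing Matrix.frobeniusNormedAlgebra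

theorem hasDerivAt_smul_add_one_sub_smul {E : Type*} [NormedAddCommGroup E] [NormedSpace ℝ E]
    (a₀ a₁ : E) (t : ℝ) : HasDerivAt (fun s : ℝ => s • a₁ + (1 - s) • a₀) (a₁ - a₀) t := by
  convert AffineMap.hasDerivAt_lineMap (a := a₀) (b := a₁) (x := t) using 1
  ext s
  rw [AffineMap.lineMap_apply_module, add_comm]

theorem hasDerivAt_mul_const_mul {𝔸 : Type*} [NormedRing 𝔸] [NormedAlgebra ℝ 𝔸]
    {b : ℝ → 𝔸} {b' : 𝔸} {t : ℝ} (hb : HasDerivAt b b' t) (d : 𝔸) :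
    HasDerivAt (fun s => b s * d * b s) (b' * d * b t + b t * d * b') t := by
  have h := (hb.mul (hasDerivAt_const t d)).mul hb
  simp only [mul_zero, add_zero] at h
  exact h

namespace Matrix

variable {n : Type*}

theorem PosDef.smul_add_one_sub_smul {A₀ A₁ : Matrix n n ℝ} (hA₀ : A₀.PosDef)
    (hA₁ : A₁.PosSemidef) {t : ℝ} (ht₀ : 0 ≤ t) (ht₁ : t < 1) :
    (t • A₁ + (1 - t) • A₀).PosDef :=
  PosDef.posSemidef_add (hA₁.smul ht₀) (hA₀.smul (by linarith))

variable [Fintype n] [DecidableEq n] {R : Type*} [CommRing R] {B D Δ : Matrix n n R}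

theorem nonsing_inv_mul_mul_cancel_of_commute (hB : IsUnit B.det) (hBΔ : Commute B Δ) :
    B⁻¹ * Δ * B = Δ := by
  rw [mul_assoc, ← hBΔ.eq, nonsing_inv_mul_cancel_left _ _ hB]

theorem mul_mul_mul_nonsing_inv_mul_cancel (hB : IsUnit B.det) :
    B * D * B * (B⁻¹ * Δ) = B * D * Δ := by
  rw [mul_assoc (B * D), mul_nonsing_inv_cancel_left _ _ hB]

theorem nonsing_inv_mul_mul_mul_mul_cancel_of_commute (hB : IsUnit B.det) (hBΔ : Commute B Δ) :
    B⁻¹ * Δ * (B * D * B) = Δ * D * B := by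
  rw [← mul_assoc, ← mul_assoc, nonsing_inv_mul_mul_cancel_of_commute hB hBΔ]

theorem trace_mul_mul_mul_nonsing_inv_mul_nonsing_inv_mul_of_commute (hB : IsUnit B.det)
    (hBΔ : Commute B Δ) : (B * D * B * (B⁻¹ * Δ) * (B⁻¹ * Δ)).trace = (D * Δ * Δ).trace := by
  rw [mul_mul_mul_nonsing_inv_mul_cancel hB, mul_assoc B, mul_assoc B, trace_mul_comm, mul_assoc,
    nonsing_inv_mul_mul_cancel_of_commute hB hBΔ]

end Matrix

theorem bures_energy_general {d : ℕ} (A₀ A₁ D : Matrix (Fin d) (Fin d) ℝ)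
    (hA₀ : A₀.PosDef) (hA₁ : A₁.PosSemidef)
    (hcomm : A₀ * A₁ = A₁ * A₀)
    (F U : ℝ → Matrix (Fin d) (Fin d) ℝ)
    (hF : ∀ t : ℝ, F t = (t • A₁ + (1 - t) • A₀) * D * (t • A₁ + (1 - t) • A₀))
    (hU : ∀ t : ℝ, U t = (2 : ℝ) • ((t • A₁ + (1 - t) • A₀)⁻¹ * (A₁ - A₀))) :
    (∀ t ∈ Set.Ico (0 : ℝ) 1,
      HasDerivAt F ((1 / 2 : ℝ) • (F t * U t + U t * F t)) t) ∧
    ∫ t in (0 : ℝ)..1, (F t * U t * U t).trace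
      = 4 * (D * (A₁ - A₀) * (A₁ - A₀)).trace := by
  have hunit : ∀ t ∈ Set.Ico (0 : ℝ) 1, IsUnit (t • A₁ + (1 - t) • A₀).det := fun t ht =>
    (isUnit_iff_isUnit_det _).mp (hA₀.smul_add_one_sub_smul hA₁ ht.1 ht.2).isUnit
  have hcommΔ (t : ℝ) : Commute (t • A₁ + (1 - t) • A₀) (A₁ - A₀) :=
    have h : Commute A₀ A₁ := hcomm
    (((Commute.refl A₁).sub_right h.symm).smul_left t).add_left
      ((h.sub_right (Commute.refl A₀)).smul_left (1 - t))
  refine ⟨fun t ht => ?_, ?_⟩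
  · have hFU : (1 / 2 : ℝ) • (F t * U t + U t * F t) = (A₁ - A₀) * D * (t • A₁ + (1 - t) • A₀)
        + (t • A₁ + (1 - t) • A₀) * D * (A₁ - A₀) := by
      simp only [hF, hU, mul_smul_comm, smul_mul_assoc,
        mul_mul_mul_nonsing_inv_mul_cancel (hunit t ht),
        nonsing_inv_mul_mul_mul_mul_cancel_of_commute (hunit t ht) (hcommΔ t), ← smul_add,
        smul_smul]
      norm_num [add_comm]
    rw [hFU, funext hF]
    exact hasDerivAt_mul_const_mul (hasDerivAt_smul_add_one_sub_smul A₀ A₁ t) D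
  · have hconst : ∀ t ∈ Set.Ioo (0 : ℝ) 1,
        (F t * U t * U t).trace = 4 * (D * (A₁ - A₀) * (A₁ - A₀)).trace := fun t ht => by
      simp only [hF, hU, mul_smul_comm, smul_mul_assoc, smul_smul, trace_smul, smul_eq_mul,
        trace_mul_mul_mul_nonsing_inv_mul_nonsing_inv_mul_of_commute
          (hunit t (Set.Ioo_subset_Ico_self ht)) (hcommΔ t)]
      norm_num
    rw [intervalIntegral.integral_of_le zero_le_one, integral_Ioc_eq_integral_Ioo,
      setIntegral_congr_fun measurableSet_Ioo hconst]
    simp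

/-- For commuting `A₀ ∈ 𝒫⁺⁺`, `A₁ ∈ 𝒫⁺` and `D ∈ 𝒫⁺`, the curve
`F(t) = (tA₁+(1-t)A₀) D (tA₁+(1-t)A₀)` with potential
`U(t) = 2 (tA₁+(1-t)A₀)⁻¹ (A₁-A₀)` satisfies
`F'(t) = ½ (F(t) U(t) + U(t) F(t))` on `[0,1)` and has constant energy
`∫₀¹ Tr (F U U) dt = 4 Tr (D (A₁-A₀)²)`. -/
theorem bures_energy {d : ℕ} (A₀ A₁ D : Matrix (Fin d) (Fin d) ℝ)
    (hA₀ : A₀.PosDef) (hA₁ : A₁.PosSemidef) (hD : D.PosSemidef)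
    (hcomm : A₀ * A₁ = A₁ * A₀)
    (F U : ℝ → Matrix (Fin d) (Fin d) ℝ)
    (hF : ∀ t : ℝ, F t = (t • A₁ + (1 - t) • A₀) * D * (t • A₁ + (1 - t) • A₀))
    (hU : ∀ t : ℝ, U t = (2 : ℝ) • ((t • A₁ + (1 - t) • A₀)⁻¹ * (A₁ - A₀))) :
    (∀ t ∈ Set.Ico (0 : ℝ) 1,
      HasDerivAt F ((1 / 2 : ℝ) • (F t * U t + U t * F t)) t) ∧
    ∫ t in (0 : ℝ)..1, (F t * U t * U t).trace
      = 4 * (D * (A₁ - A₀) * (A₁ - A₀)).trace :=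
  bures_energy_general A₀ A₁ D hA₀ hA₁ hcomm F U hF hU
end
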